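/- arXiv:1105.3957 — 4 statements merged into one kernel-verified Lean document; each statement's English description precedes it below -/
import Mathlib

section
/- For every symmetric bilinear form Ric on V, every vector v ∈ V, and all real numbers λ and m with m ≠ 0, the contraction of the D-tensor against the tensor Ric − (1/m) v♭⊗v♭ − λ g in the first and third slots, with v inserted in the second slot, satisfies Σ_{i,j=1}^n D(e_i, v, e_j)·(Ric(e_i,e_j) − (1/m)⟨v,e_i⟩⟨v,e_j⟩ − λ⟨e_i,e_j⟩) = −((n−2)/2)·|D|². In particular this contraction is nonpositive, and it vanishes if and only if D = 0. -/
open scoped InnerProductSpace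
open Finset

/-!
Write `D(X,Y,Z) = S(X,Y,Z) - S(Y,X,Z)` with
`S = (a Ric(·,v) - c ⟪·,v⟫) ⊗ g + b ⟪·,v⟫ ⊗ Ric`, where `a = 1/((n-1)(n-2))`, `b = 1/(n-2)` and
`c = a scal`. Antisymmetry gives `|D|² = 2 ⟨D, S⟩`. The first part of `S` pairs with the trace of
`D` over its last two slots, which vanishes because `b = (n-1) a` and `c = a scal`; the second part
pairs to `b ∑ D(v, e_j, e_k) Ric(e_j, e_k) = -b ∑ D(e_j, v, e_k) Ric(e_j, e_k)`. So
`|D|² = -2b ∑ D(e_j, v, e_k) Ric(e_j, e_k)`, and the other two terms of the contraction vanish: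
`D(v, v, ·) = 0` kills `v♭ ⊗ v♭`, and `D` is trace-free, which kills `g`.
-/

lemma sum_sq_eq_two_mul_sum_mul_of_eq_sub_swap {ι κ : Type*} [Fintype ι] [Fintype κ]
    (T S : ι → ι → κ → ℝ) (hT : ∀ i j k, T i j k = S i j k - S j i k) :
    ∑ i, ∑ j, ∑ k, T i j k ^ 2 = 2 * ∑ i, ∑ j, ∑ k, T i j k * S i j k := by
  have hanti (i j k) : T j i k * S i j k = -(T i j k * S i j k) := by
    rw [hT, hT]
    ring
  have hswap : ∑ i, ∑ j, ∑ k, T i j k * S j i k = -∑ i, ∑ j, ∑ k, T i j k * S i j k := by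
    rw [sum_comm]
    simp only [hanti, sum_neg_distrib]
  calc ∑ i, ∑ j, ∑ k, T i j k ^ 2
      = ∑ i, ∑ j, ∑ k, T i j k * S i j k - ∑ i, ∑ j, ∑ k, T i j k * S j i k := by
        simp only [← sum_sub_distrib, ← mul_sub, ← hT, sq]
    _ = 2 * ∑ i, ∑ j, ∑ k, T i j k * S i j k := by rw [hswap]; ring

lemma sum_sum_sum_sq_eq_zero_iff {ι κ μ : Type*} [Fintype ι] [Fintype κ] [Fintype μ]
    (f : ι → κ → μ → ℝ) : ∑ i, ∑ j, ∑ k, f i j k ^ 2 = 0 ↔ ∀ i j k, f i j k = 0 := by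
  simp only [sum_eq_zero_iff_of_nonneg fun _ _ => sum_nonneg fun _ _ => sum_nonneg fun _ _ =>
      sq_nonneg _, sum_eq_zero_iff_of_nonneg fun _ _ => sum_nonneg fun _ _ => sq_nonneg _,
    sum_eq_zero_iff_of_nonneg fun _ _ => sq_nonneg _, mem_univ, true_implies, sq_eq_zero_iff]

section

variable {ι E : Type*} [Fintype ι] [NormedAddCommGroup E] [InnerProductSpace ℝ E]

lemma OrthonormalBasis.sum_inner_mul_apply (e : OrthonormalBasis ι ℝ E) {f : E → ℝ}
    (hf : IsLinearMap ℝ f) (x : E) : ∑ i, ⟪x, e i⟫_ℝ * f (e i) = f x := by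
  conv_rhs => rw [← e.sum_repr' x]
  change _ = IsLinearMap.mk' f hf _
  simp [real_inner_comm]

lemma OrthonormalBasis.sum_inner_self (e : OrthonormalBasis ι ℝ E) :
    ∑ i, ⟪e i, e i⟫_ℝ = Fintype.card ι := by
  simp [e.orthonormal.1]

def dTensor (a b c : ℝ) (Ric : E →ₗ[ℝ] E →ₗ[ℝ] ℝ) (v X Y Z : E) : ℝ :=
  a * (Ric X v * ⟪Y, Z⟫_ℝ - Ric Y v * ⟪X, Z⟫_ℝ)
    + b * (Ric Y Z * ⟪X, v⟫_ℝ - Ric X Z * ⟪Y, v⟫_ℝ)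
    - c * (⟪X, v⟫_ℝ * ⟪Y, Z⟫_ℝ - ⟪Y, v⟫_ℝ * ⟪X, Z⟫_ℝ)

def dTensorHalf (a b c : ℝ) (Ric : E →ₗ[ℝ] E →ₗ[ℝ] ℝ) (v X Y Z : E) : ℝ :=
  (a * Ric X v - c * ⟪X, v⟫_ℝ) * ⟪Y, Z⟫_ℝ + b * ⟪X, v⟫_ℝ * Ric Y Z

variable {a b c : ℝ} (Ric : E →ₗ[ℝ] E →ₗ[ℝ] ℝ) (v : E)

lemma dTensor_eq_sub_swap (X Y Z : E) :
    dTensor a b c Ric v X Y Z = dTensorHalf a b c Ric v X Y Z - dTensorHalf a b c Ric v Y X Z := by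
  unfold dTensor dTensorHalf
  ring

lemma dTensor_swap (X Y Z : E) : dTensor a b c Ric v Y X Z = -dTensor a b c Ric v X Y Z := by
  unfold dTensor
  ring

lemma dTensor_self_left (X Z : E) : dTensor a b c Ric v X X Z = 0 := by
  unfold dTensor
  ring

lemma isLinearMap_dTensor_left (Y Z : E) : IsLinearMap ℝ fun X => dTensor a b c Ric v X Y Z := by
  constructor
  · intro X X'
    simp only [dTensor, map_add, LinearMap.add_apply, inner_add_left]
    ring
  · intro r X
    simp only [dTensor, map_smul, LinearMap.smul_apply, smul_eq_mul, real_inner_smul_left]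
    ring

lemma isLinearMap_dTensor_middle (X Z : E) :
    IsLinearMap ℝ fun Y => dTensor a b c Ric v X Y Z := by
  constructor
  · intro Y Y'
    simp only [dTensor, map_add, LinearMap.add_apply, inner_add_left]
    ring
  · intro r Y
    simp only [dTensor, map_smul, LinearMap.smul_apply, smul_eq_mul, real_inner_smul_left]
    ring

lemma isLinearMap_dTensor_right (X Y : E) :
    IsLinearMap ℝ fun Z => dTensor a b c Ric v X Y Z := by
  constructor
  · intro Z Z'
    simp only [dTensor, map_add, inner_add_right]
    ring
  · intro r Z
    simp only [dTensor, map_smul, smul_eq_mul, real_inner_smul_right]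
    ring

variable (e : OrthonormalBasis ι ℝ E)

lemma dTensor_eq_zero_of_basis (h : ∀ i j k, dTensor a b c Ric v (e i) (e j) (e k) = 0)
    (X Y Z : E) : dTensor a b c Ric v X Y Z = 0 := by
  rw [← e.sum_inner_mul_apply (isLinearMap_dTensor_left Ric v Y Z)]
  refine sum_eq_zero fun i _ => ?_
  rw [← e.sum_inner_mul_apply (isLinearMap_dTensor_middle Ric v (e i) Z), mul_eq_zero_of_right]
  refine sum_eq_zero fun j _ => ?_
  rw [← e.sum_inner_mul_apply (isLinearMap_dTensor_right Ric v (e i) (e j)), mul_eq_zero_of_right]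
  exact sum_eq_zero fun k _ => by rw [h, mul_zero]

lemma sum_dTensor_trace_eq_zero (hb : b = (Fintype.card ι - 1) * a)
    (hc : c = a * ∑ i, Ric (e i) (e i)) (X : E) :
    ∑ j, dTensor a b c Ric v X (e j) (e j) = 0 := by
  have hRicX : ∑ j, Ric (e j) v * ⟪X, e j⟫_ℝ = Ric X v := by
    simpa only [mul_comm] using e.sum_inner_mul_apply (f := fun Y => Ric Y v) (Ric.flip v).isLinear X
  have hRicv : ∑ j, Ric X (e j) * ⟪e j, v⟫_ℝ = Ric X v := by
    simpa only [mul_comm, real_inner_comm v] using e.sum_inner_mul_apply (Ric X).isLinear v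
  have hinner : ∑ j, ⟪e j, v⟫_ℝ * ⟪X, e j⟫_ℝ = ⟪X, v⟫_ℝ := by
    simpa only [mul_comm] using e.sum_inner_mul_inner X v
  simp only [dTensor, mul_sub, sum_sub_distrib, sum_add_distrib, ← mul_sum]
  rw [hRicX, hRicv, hinner, ← sum_mul, e.sum_inner_self, hb, hc]
  ring

lemma sum_sq_dTensor_eq_ric_contraction (hb : b = (Fintype.card ι - 1) * a)
    (hc : c = a * ∑ i, Ric (e i) (e i)) :
    ∑ i, ∑ j, ∑ k, dTensor a b c Ric v (e i) (e j) (e k) ^ 2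
      = -2 * b * ∑ i, ∑ j, dTensor a b c Ric v (e i) v (e j) * Ric (e i) (e j) := by
  have htrace (i : ι) :
      ∑ j, ∑ k, ⟪e j, e k⟫_ℝ * dTensor a b c Ric v (e i) (e j) (e k) = 0 := by
    simp only [e.sum_inner_mul_apply (isLinearMap_dTensor_right Ric v _ _)]
    exact sum_dTensor_trace_eq_zero Ric v e hb hc (e i)
  have hcontract : ∑ i, ∑ j, ∑ k,
        Ric (e j) (e k) * (⟪v, e i⟫_ℝ * dTensor a b c Ric v (e i) (e j) (e k))
      = -∑ j, ∑ k, dTensor a b c Ric v (e j) v (e k) * Ric (e j) (e k) := by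
    rw [sum_comm, ← sum_neg_distrib]
    refine sum_congr rfl fun j _ => ?_
    rw [sum_comm, ← sum_neg_distrib]
    refine sum_congr rfl fun k _ => ?_
    rw [← mul_sum, e.sum_inner_mul_apply (isLinearMap_dTensor_left Ric v _ _), dTensor_swap]
    ring
  have hsplit (i j k : ι) : dTensor a b c Ric v (e i) (e j) (e k)
        * dTensorHalf a b c Ric v (e i) (e j) (e k)
      = (a * Ric (e i) v - c * ⟪e i, v⟫_ℝ) * (⟪e j, e k⟫_ℝ * dTensor a b c Ric v (e i) (e j) (e k))
        + b * (Ric (e j) (e k) * (⟪v, e i⟫_ℝ * dTensor a b c Ric v (e i) (e j) (e k))) := by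
    rw [dTensorHalf, real_inner_comm v]
    ring
  rw [sum_sq_eq_two_mul_sum_mul_of_eq_sub_swap
    (fun i j k => dTensor a b c Ric v (e i) (e j) (e k))
    (fun i j k => dTensorHalf a b c Ric v (e i) (e j) (e k))
    fun i j k => dTensor_eq_sub_swap Ric v _ _ _]
  simp only [hsplit, sum_add_distrib, ← mul_sum, htrace, mul_zero, zero_add, hcontract]
  ring

lemma sum_dTensor_mul_inner_mul_inner_eq_zero :
    ∑ i, ∑ j, dTensor a b c Ric v (e i) v (e j) * (⟪v, e i⟫_ℝ * ⟪v, e j⟫_ℝ) = 0 := by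
  have hexpand : ∑ i, ∑ j, dTensor a b c Ric v (e i) v (e j) * (⟪v, e i⟫_ℝ * ⟪v, e j⟫_ℝ)
      = ∑ i, ⟪v, e i⟫_ℝ * ∑ j, ⟪v, e j⟫_ℝ * dTensor a b c Ric v (e i) v (e j) := by
    simp only [mul_sum]
    exact sum_congr rfl fun i _ => sum_congr rfl fun j _ => by ring
  rw [hexpand]
  simp only [e.sum_inner_mul_apply (isLinearMap_dTensor_right Ric v _ _)]
  rw [e.sum_inner_mul_apply (isLinearMap_dTensor_left Ric v _ _), dTensor_self_left]

lemma sum_dTensor_mul_inner_eq_zero (hb : b = (Fintype.card ι - 1) * a)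
    (hc : c = a * ∑ i, Ric (e i) (e i)) :
    ∑ i, ∑ j, dTensor a b c Ric v (e i) v (e j) * ⟪e i, e j⟫_ℝ = 0 := by
  have hdiag (i : ι) : ∑ j, dTensor a b c Ric v (e i) v (e j) * ⟪e i, e j⟫_ℝ
      = -dTensor a b c Ric v v (e i) (e i) := by
    rw [← dTensor_swap, ← e.sum_inner_mul_apply (isLinearMap_dTensor_right Ric v _ _)]
    exact sum_congr rfl fun j _ => mul_comm _ _
  simp only [hdiag, sum_neg_distrib, sum_dTensor_trace_eq_zero Ric v e hb hc, neg_zero]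

theorem sum_sq_dTensor_eq_contraction (hb : b = (Fintype.card ι - 1) * a)
    (hc : c = a * ∑ i, Ric (e i) (e i)) (μ lam : ℝ) :
    ∑ i, ∑ j, ∑ k, dTensor a b c Ric v (e i) (e j) (e k) ^ 2
      = -2 * b * ∑ i, ∑ j, dTensor a b c Ric v (e i) v (e j) *
          (Ric (e i) (e j) - μ * ⟪v, e i⟫_ℝ * ⟪v, e j⟫_ℝ - lam * ⟪e i, e j⟫_ℝ) := by
  have hsplit (i j : ι) : dTensor a b c Ric v (e i) v (e j) *
        (Ric (e i) (e j) - μ * ⟪v, e i⟫_ℝ * ⟪v, e j⟫_ℝ - lam * ⟪e i, e j⟫_ℝ)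
      = dTensor a b c Ric v (e i) v (e j) * Ric (e i) (e j)
        - μ * (dTensor a b c Ric v (e i) v (e j) * (⟪v, e i⟫_ℝ * ⟪v, e j⟫_ℝ))
        - lam * (dTensor a b c Ric v (e i) v (e j) * ⟪e i, e j⟫_ℝ) := by
    ring
  simp only [hsplit, sum_sub_distrib, ← mul_sum, sum_dTensor_mul_inner_mul_inner_eq_zero,
    sum_dTensor_mul_inner_eq_zero Ric v e hb hc, sum_sq_dTensor_eq_ric_contraction Ric v e hb hc]
  ring

end

theorem stmt_1_general (n : ℕ) (hn : 3 ≤ n) (m lam : ℝ)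
    (e : OrthonormalBasis (Fin n) ℝ (EuclideanSpace ℝ (Fin n)))
    (Ric : EuclideanSpace ℝ (Fin n) →ₗ[ℝ] EuclideanSpace ℝ (Fin n) →ₗ[ℝ] ℝ)
    (v : EuclideanSpace ℝ (Fin n))
    (D : EuclideanSpace ℝ (Fin n) → EuclideanSpace ℝ (Fin n) →
      EuclideanSpace ℝ (Fin n) → ℝ)
    (hD : ∀ X Y Z, D X Y Z =
      (1 / (((n : ℝ) - 1) * ((n : ℝ) - 2))) *
        (Ric X v * ⟪Y, Z⟫_ℝ - Ric Y v * ⟪X, Z⟫_ℝ)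
      + (1 / ((n : ℝ) - 2)) * (Ric Y Z * ⟪X, v⟫_ℝ - Ric X Z * ⟪Y, v⟫_ℝ)
      - ((∑ i, Ric (e i) (e i)) / (((n : ℝ) - 1) * ((n : ℝ) - 2))) *
          (⟪X, v⟫_ℝ * ⟪Y, Z⟫_ℝ - ⟪Y, v⟫_ℝ * ⟪X, Z⟫_ℝ)) :
    (∑ i, ∑ j, D (e i) v (e j) *
        (Ric (e i) (e j) - (1 / m) * ⟪v, e i⟫_ℝ * ⟪v, e j⟫_ℝ - lam * ⟪e i, e j⟫_ℝ)
      = -(((n : ℝ) - 2) / 2) * ∑ i, ∑ j, ∑ k, (D (e i) (e j) (e k)) ^ 2) ∧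
    (∑ i, ∑ j, D (e i) v (e j) *
        (Ric (e i) (e j) - (1 / m) * ⟪v, e i⟫_ℝ * ⟪v, e j⟫_ℝ - lam * ⟪e i, e j⟫_ℝ)
      ≤ 0) ∧
    ((∑ i, ∑ j, D (e i) v (e j) *
        (Ric (e i) (e j) - (1 / m) * ⟪v, e i⟫_ℝ * ⟪v, e j⟫_ℝ - lam * ⟪e i, e j⟫_ℝ)
      = 0) ↔ ∀ X Y Z, D X Y Z = 0) := by
  have hn2 : (0 : ℝ) < n - 2 := by
    have : (3 : ℝ) ≤ n := by exact_mod_cast hn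
    linarith
  obtain rfl : D = dTensor (1 / ((n - 1) * (n - 2))) (1 / (n - 2))
      ((∑ i, Ric (e i) (e i)) / ((n - 1) * (n - 2))) Ric v := by
    funext X Y Z
    exact hD X Y Z
  have hb : 1 / ((n : ℝ) - 2) = (Fintype.card (Fin n) - 1) * (1 / ((n - 1) * (n - 2))) := by
    have hn1 : (n : ℝ) - 1 ≠ 0 := by linarith
    rw [Fintype.card_fin]
    field_simp
  have hc : (∑ i, Ric (e i) (e i)) / (((n : ℝ) - 1) * (n - 2))
      = 1 / ((n - 1) * (n - 2)) * ∑ i, Ric (e i) (e i) := by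
    ring
  have key := sum_sq_dTensor_eq_contraction Ric v e hb hc (1 / m) lam
  refine (fun hmain => ⟨hmain, ?_, ?_⟩) (by rw [key]; field_simp)
  · rw [hmain]
    exact mul_nonpos_of_nonpos_of_nonneg (by linarith) (by positivity)
  · rw [hmain, mul_eq_zero, or_iff_right (by linarith), sum_sum_sum_sq_eq_zero_iff]
    exact ⟨fun h => dTensor_eq_zero_of_basis Ric v e h, fun h i j k => h _ _ _⟩

/-- Contracting the D-tensor against `Ric - (1/m) v♭ ⊗ v♭ - λ g` in the first and
third slots, with `v` in the second slot, gives `-((n-2)/2) |D|²`; in particular the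
contraction is nonpositive and vanishes iff `D = 0`. -/
theorem stmt_1 (n : ℕ) (hn : 3 ≤ n) (m lam : ℝ) (hm : m ≠ 0)
    (e : OrthonormalBasis (Fin n) ℝ (EuclideanSpace ℝ (Fin n)))
    (Ric : EuclideanSpace ℝ (Fin n) →ₗ[ℝ] EuclideanSpace ℝ (Fin n) →ₗ[ℝ] ℝ)
    (hRicSymm : ∀ X Y, Ric X Y = Ric Y X)
    (v : EuclideanSpace ℝ (Fin n))
    (D : EuclideanSpace ℝ (Fin n) → EuclideanSpace ℝ (Fin n) →
      EuclideanSpace ℝ (Fin n) → ℝ)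
    (hD : ∀ X Y Z, D X Y Z =
      (1 / (((n : ℝ) - 1) * ((n : ℝ) - 2))) *
        (Ric X v * ⟪Y, Z⟫_ℝ - Ric Y v * ⟪X, Z⟫_ℝ)
      + (1 / ((n : ℝ) - 2)) * (Ric Y Z * ⟪X, v⟫_ℝ - Ric X Z * ⟪Y, v⟫_ℝ)
      - ((∑ i, Ric (e i) (e i)) / (((n : ℝ) - 1) * ((n : ℝ) - 2))) *
          (⟪X, v⟫_ℝ * ⟪Y, Z⟫_ℝ - ⟪Y, v⟫_ℝ * ⟪X, Z⟫_ℝ)) :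
    (∑ i, ∑ j, D (e i) v (e j) *
        (Ric (e i) (e j) - (1 / m) * ⟪v, e i⟫_ℝ * ⟪v, e j⟫_ℝ - lam * ⟪e i, e j⟫_ℝ)
      = -(((n : ℝ) - 2) / 2) * ∑ i, ∑ j, ∑ k, (D (e i) (e j) (e k)) ^ 2) ∧
    (∑ i, ∑ j, D (e i) v (e j) *
        (Ric (e i) (e j) - (1 / m) * ⟪v, e i⟫_ℝ * ⟪v, e j⟫_ℝ - lam * ⟪e i, e j⟫_ℝ)
      ≤ 0) ∧
    ((∑ i, ∑ j, D (e i) v (e j) *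
        (Ric (e i) (e j) - (1 / m) * ⟪v, e i⟫_ℝ * ⟪v, e j⟫_ℝ - lam * ⟪e i, e j⟫_ℝ)
      = 0) ↔ ∀ X Y Z, D X Y Z = 0) :=
  stmt_1_general n hn m lam e Ric v D hD
end

section
/- (Norm expansion of the D-tensor.) Let n ≥ 3, let m, λ, ρ be real numbers, let Ric be a symmetric bilinear form on V with scal := Σ_i Ric(e_i,e_i), and let v, p ∈ V satisfy scal = (n−1)λ − (m−1)ρ and Ric(X,v) = ρ⟨X,v⟩ − (m/2)⟨X,p⟩ for all X ∈ V. Then |D|² = (1/(2(n−1)(n−2)²))·(4(n−1)|v|²|Ric|² − m²n|p|²) + (4m((m+n−1)ρ − (n−1)λ)/(2(n−1)(n−2)²))·⟨p,v⟩ − (4(((n−1)λ − mρ)² + (n−1)ρ²)/(2(n−1)(n−2)²))·|v|², where |Ric|² := Σ_{i,j} Ric(e_i,e_j)². -/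
/-!
In an orthonormal frame, with `(a ∧ B)ᵢⱼₖ := aᵢ Bⱼₖ - aⱼ Bᵢₖ`, the tensor is
`D = u ∧ g + (n - 2)⁻¹ • (v ∧ Ric)` where `u = (Ric(v) - scal • v) / ((n - 1)(n - 2))`.
Such wedges pair by `⟨a ∧ B, b ∧ C⟩ = 2 ⟨a, b⟩ ⟨B, C⟩ - 2 ⟨C(a), B(b)⟩`, so `|D|²` only involves
`|u|²`, `⟨u, v⟩`, `⟨u, Ric(v)⟩`, `|Ric(v)|²`, `tr Ric` and `|Ric|²`. Substituting
`Ric(v) = ρ v - (m/2) p` and `tr Ric = scal` leaves a polynomial in `|v|²`, `⟨p, v⟩`, `|p|²`, `|Ric|²`.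
-/

open scoped InnerProductSpace
open Finset Matrix

section Wedge

variable {ι : Type*} [Fintype ι]

def wedgeTensor (a : ι → ℝ) (B : Matrix ι ι ℝ) (i j k : ι) : ℝ :=
  a i * B j k - a j * B i k

theorem sum_wedgeTensor_mul_wedgeTensor (a b : ι → ℝ) (B C : Matrix ι ι ℝ) :
    ∑ i, ∑ j, ∑ k, wedgeTensor a B i j k * wedgeTensor b C i j k
      = 2 * (a ⬝ᵥ b) * (∑ j, ∑ k, B j k * C j k) - 2 * ((a ᵥ* C) ⬝ᵥ (b ᵥ* B)) := by
  have diag : ∑ i, ∑ j, ∑ k, a i * B j k * (b i * C j k)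
      = (a ⬝ᵥ b) * ∑ j, ∑ k, B j k * C j k := by
    simp only [dotProduct, sum_mul]
    refine sum_congr rfl fun i _ => ?_
    simp only [mul_sum]
    exact sum_congr rfl fun _ _ => sum_congr rfl fun _ _ => by ring
  have cross : ∑ i, ∑ j, ∑ k, a i * B j k * (b j * C i k) = (a ᵥ* C) ⬝ᵥ (b ᵥ* B) := by
    simp only [dotProduct, vecMul, sum_mul, mul_sum]
    rw [sum_congr rfl fun i _ => sum_comm, sum_comm]
    refine sum_congr rfl fun k _ => ?_
    rw [sum_comm]
    exact sum_congr rfl fun _ _ => sum_congr rfl fun _ _ => by ring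
  have swap (f : ι → ι → ι → ℝ) : ∑ i, ∑ j, ∑ k, f j i k = ∑ i, ∑ j, ∑ k, f i j k := sum_comm
  simp only [wedgeTensor, mul_sub, sub_mul, sum_sub_distrib]
  rw [swap fun i j k => a i * B j k * (b j * C i k), swap fun i j k => a i * B j k * (b i * C j k),
    diag, cross]
  ring

theorem sum_sq_wedgeTensor_one_add_mul [DecidableEq ι] (u a : ι → ℝ) (R : Matrix ι ι ℝ) (c : ℝ) :
    ∑ i, ∑ j, ∑ k, (wedgeTensor u 1 i j k + c * wedgeTensor a R i j k) ^ 2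
      = 2 * (Fintype.card ι - 1) * (u ⬝ᵥ u) + 4 * c * (trace R * (u ⬝ᵥ a) - u ⬝ᵥ (R *ᵥ a))
        + 2 * c ^ 2 * ((a ⬝ᵥ a) * (∑ j, ∑ k, R j k ^ 2) - (a ᵥ* R) ⬝ᵥ (a ᵥ* R)) := by
  have one_one : ∑ j : ι, ∑ k : ι, (1 : Matrix ι ι ℝ) j k * (1 : Matrix ι ι ℝ) j k
      = Fintype.card ι := by
    simp [one_apply]
  have one_R : ∑ j, ∑ k, (1 : Matrix ι ι ℝ) j k * R j k = trace R := by
    simp [one_apply, trace]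
  have expand : ∀ i j k, (wedgeTensor u 1 i j k + c * wedgeTensor a R i j k) ^ 2
      = wedgeTensor u 1 i j k * wedgeTensor u 1 i j k
        + 2 * c * (wedgeTensor u 1 i j k * wedgeTensor a R i j k)
        + c ^ 2 * (wedgeTensor a R i j k * wedgeTensor a R i j k) := fun _ _ _ => by ring
  simp only [expand, sum_add_distrib, ← mul_sum, sum_wedgeTensor_mul_wedgeTensor, one_one, one_R,
    vecMul_one, ← dotProduct_mulVec, sq]
  ring

end Wedge

namespace OrthonormalBasis

variable {ι E : Type*} [Fintype ι] [NormedAddCommGroup E] [InnerProductSpace ℝ E]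
  (e : OrthonormalBasis ι ℝ E)

theorem real_inner_eq_dotProduct (x y : E) :
    ⟪x, y⟫_ℝ = (fun i => ⟪e i, x⟫_ℝ) ⬝ᵥ (fun i => ⟪e i, y⟫_ℝ) := by
  simp only [dotProduct, ← e.sum_inner_mul_inner x y, real_inner_comm x]

theorem norm_sq_eq_dotProduct (x : E) :
    ‖x‖ ^ 2 = (fun i => ⟪e i, x⟫_ℝ) ⬝ᵥ (fun i => ⟪e i, x⟫_ℝ) := by
  rw [← real_inner_self_eq_norm_sq, e.real_inner_eq_dotProduct]

theorem toMatrix₂_mulVec_coords [DecidableEq ι] (B : E →ₗ[ℝ] E →ₗ[ℝ] ℝ) (y : E) :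
    LinearMap.toMatrix₂ e.toBasis e.toBasis B *ᵥ (fun j => ⟪e j, y⟫_ℝ) = fun i => B (e i) y := by
  ext i
  conv_rhs => rw [← e.sum_repr' y]
  simp [mulVec, dotProduct, LinearMap.toMatrix₂_apply, mul_comm]

theorem trace_toMatrix₂ [DecidableEq ι] (B : E →ₗ[ℝ] E →ₗ[ℝ] ℝ) :
    trace (LinearMap.toMatrix₂ e.toBasis e.toBasis B) = ∑ i, B (e i) (e i) := by
  simp [trace, LinearMap.toMatrix₂_apply]

end OrthonormalBasis

/-- Norm expansion of the D-tensor on a (λ, n+m)-Einstein manifold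
(algebraic, pointwise form). -/
theorem stmt_3 (n : ℕ) (hn : 3 ≤ n) (m lam rho : ℝ)
    (e : OrthonormalBasis (Fin n) ℝ (EuclideanSpace ℝ (Fin n)))
    (Ric : EuclideanSpace ℝ (Fin n) →ₗ[ℝ] EuclideanSpace ℝ (Fin n) →ₗ[ℝ] ℝ)
    (hRicSymm : ∀ X Y, Ric X Y = Ric Y X)
    (scal : ℝ) (hscal : scal = ∑ i, Ric (e i) (e i))
    (v p : EuclideanSpace ℝ (Fin n))
    (hscalEq : scal = ((n : ℝ) - 1) * lam - (m - 1) * rho)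
    (hRicv : ∀ X, Ric X v = rho * ⟪X, v⟫_ℝ - (m / 2) * ⟪X, p⟫_ℝ)
    (D : EuclideanSpace ℝ (Fin n) → EuclideanSpace ℝ (Fin n) →
      EuclideanSpace ℝ (Fin n) → ℝ)
    (hD : ∀ X Y Z, D X Y Z =
      (1 / (((n : ℝ) - 1) * ((n : ℝ) - 2))) *
        (Ric X v * ⟪Y, Z⟫_ℝ - Ric Y v * ⟪X, Z⟫_ℝ)
      + (1 / ((n : ℝ) - 2)) * (Ric Y Z * ⟪X, v⟫_ℝ - Ric X Z * ⟪Y, v⟫_ℝ)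
      - (scal / (((n : ℝ) - 1) * ((n : ℝ) - 2))) *
          (⟪X, v⟫_ℝ * ⟪Y, Z⟫_ℝ - ⟪Y, v⟫_ℝ * ⟪X, Z⟫_ℝ)) :
    ∑ i, ∑ j, ∑ k, (D (e i) (e j) (e k)) ^ 2
      = (1 / (2 * ((n : ℝ) - 1) * ((n : ℝ) - 2) ^ 2)) *
          (4 * ((n : ℝ) - 1) * ‖v‖ ^ 2 * (∑ i, ∑ j, (Ric (e i) (e j)) ^ 2)
            - m ^ 2 * (n : ℝ) * ‖p‖ ^ 2)
        + (4 * m * ((m + (n : ℝ) - 1) * rho - ((n : ℝ) - 1) * lam) /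
            (2 * ((n : ℝ) - 1) * ((n : ℝ) - 2) ^ 2)) * ⟪p, v⟫_ℝ
        - (4 * (((((n : ℝ) - 1) * lam - m * rho)) ^ 2 + ((n : ℝ) - 1) * rho ^ 2) /
            (2 * ((n : ℝ) - 1) * ((n : ℝ) - 2) ^ 2)) * ‖v‖ ^ 2 := by
  have : (3 : ℝ) ≤ n := mod_cast hn
  have hn1 : (n : ℝ) - 1 ≠ 0 := by linarith
  have hn2 : (n : ℝ) - 2 ≠ 0 := by linarith
  rw [e.norm_sq_eq_dotProduct v, e.norm_sq_eq_dotProduct p, e.real_inner_eq_dotProduct p v]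
  set R := LinearMap.toMatrix₂ e.toBasis e.toBasis Ric with hR
  set a : Fin n → ℝ := fun i => ⟪e i, v⟫_ℝ
  set q : Fin n → ℝ := fun i => ⟪e i, p⟫_ℝ
  have hRa : R *ᵥ a = rho • a - (m / 2) • q := by
    rw [e.toMatrix₂_mulVec_coords]
    ext i
    simp [hRicv, a, q]
  have haR : a ᵥ* R = R *ᵥ a := by
    rw [← mulVec_transpose]
    congr with i j
    simp [hR, LinearMap.toMatrix₂_apply, hRicSymm]
  have hDe : ∀ i j k, D (e i) (e j) (e k)
      = wedgeTensor ((((n : ℝ) - 1) * ((n : ℝ) - 2))⁻¹ • ((rho - scal) • a - (m / 2) • q)) 1 i j k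
        + 1 / ((n : ℝ) - 2) * wedgeTensor a R i j k := by
    intro i j k
    simp only [hD, hRicv, wedgeTensor, hR, LinearMap.toMatrix₂_apply, OrthonormalBasis.coe_toBasis,
      orthonormal_iff_ite.mp e.orthonormal, one_apply, Pi.smul_apply, Pi.sub_apply, smul_eq_mul, a, q]
    split_ifs <;> ring
  have htr : trace R = scal := by rw [hscal, e.trace_toMatrix₂]
  simp only [hDe, sum_sq_wedgeTensor_one_add_mul, Fintype.card_fin, haR, hRa, htr]
  simp only [hR, LinearMap.toMatrix₂_apply, OrthonormalBasis.coe_toBasis, smul_dotProduct,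
    dotProduct_smul, sub_dotProduct, dotProduct_sub, smul_eq_mul, dotProduct_comm q a, hscalEq]
  field_simp
  ring
end

section
/- (Traceless second fundamental form expansion.) Let n ≥ 3, let m, λ, ρ be real numbers, let Ric be a symmetric bilinear form on V with scal := Σ_i Ric(e_i,e_i), and let v ≠ 0 and p in V satisfy scal = (n−1)λ − (m−1)ρ and Ric(X,v) = ρ⟨X,v⟩ − (m/2)⟨X,p⟩ for all X ∈ V. Let (e_2,…,e_n) be an orthonormal basis of v^⊥, define h_{ab} := (1/|v|)(λ δ_{ab} − Ric(e_a,e_b)) for a,b = 2,…,n and σ := (1/(n−1)) Σ_{a=2}^n h_{aa}. Then Σ_{a,b=2}^n (h_{ab} − σδ_{ab})² = (1/|v|²)|Ric|² − (m²/(2|v|⁴))|p|² + (m²(n−2)/(4(n−1)|v|⁶))⟨p,v⟩² + (m((m+n−1)ρ − (n−1)λ)/((n−1)|v|⁴))⟨p,v⟩ − ((m²+n−1)/((n−1)|v|²))ρ² + (2m/|v|²)λρ − ((n−1)/|v|²)λ², where |Ric|² := Σ_{i,j} Ric(e_i,e_j)² over a full orthonormal basis of V. -/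
open scoped InnerProductSpace

section Aux
variable {E : Type*} [NormedAddCommGroup E] [InnerProductSpace ℝ E]
variable {ι κ : Type*} [Fintype ι] [Fintype κ]

lemma my_sum_sq_inner (b : OrthonormalBasis ι ℝ E) (y : E) :
    ∑ i, ⟪y, b i⟫_ℝ ^ 2 = ‖y‖ ^ 2 := by
  have h := b.sum_inner_mul_inner y y
  rw [real_inner_self_eq_norm_sq] at h
  rw [← h]
  refine Finset.sum_congr rfl fun i _ => ?_
  rw [sq, real_inner_comm y (b i)]

lemma my_form_apply (e : OrthonormalBasis κ ℝ E) (L : E →ₗ[ℝ] ℝ) (z : E) :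
    L z = ⟪∑ k, L (e k) • e k, z⟫_ℝ := by
  rw [sum_inner]
  simp only [real_inner_smul_left]
  conv_lhs => rw [← e.sum_repr' z]
  rw [map_sum]
  refine Finset.sum_congr rfl fun k _ => ?_
  rw [map_smul]
  simp [mul_comm]

lemma my_sum_sq_apply_eq (b : OrthonormalBasis ι ℝ E) (e : OrthonormalBasis κ ℝ E)
    (L : E →ₗ[ℝ] ℝ) : ∑ i, (L (b i)) ^ 2 = ∑ k, (L (e k)) ^ 2 := by
  have h1 : ∑ i, (L (b i)) ^ 2 = ‖∑ k, L (e k) • e k‖ ^ 2 := by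
    rw [← my_sum_sq_inner b (∑ k, L (e k) • e k)]
    refine Finset.sum_congr rfl fun i _ => ?_
    rw [← my_form_apply e L (b i)]
  have h2 : ∑ k, (L (e k)) ^ 2 = ‖∑ k, L (e k) • e k‖ ^ 2 := by
    rw [← my_sum_sq_inner e (∑ k, L (e k) • e k)]
    refine Finset.sum_congr rfl fun k _ => ?_
    rw [← my_form_apply e L (e k)]
  rw [h1, h2]

lemma my_trace_eq (b : OrthonormalBasis ι ℝ E) (e : OrthonormalBasis κ ℝ E)
    (B : E →ₗ[ℝ] E →ₗ[ℝ] ℝ) (hB : ∀ x y, B x y = B y x) :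
    ∑ i, B (b i) (b i) = ∑ k, B (e k) (e k) := by
  have key : ∀ i, B (b i) (b i) = ∑ k, ⟪e k, b i⟫_ℝ * B (b i) (e k) := by
    intro i
    nth_rw 2 [← e.sum_repr' (b i)]
    rw [map_sum]
    refine Finset.sum_congr rfl fun k _ => ?_
    rw [map_smul]; simp
  simp_rw [key]
  rw [Finset.sum_comm]
  refine Finset.sum_congr rfl fun k _ => ?_
  have h2 : ∑ i, ⟪b i, e k⟫_ℝ • b i = e k := b.sum_repr' (e k)
  calc ∑ i, ⟪e k, b i⟫_ℝ * B (b i) (e k)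
      = B (e k) (∑ i, ⟪b i, e k⟫_ℝ • b i) := by
        rw [map_sum]
        refine Finset.sum_congr rfl fun i _ => ?_
        rw [map_smul]
        simp [real_inner_comm, hB (b i) (e k)]
    _ = B (e k) (e k) := by rw [h2]

lemma my_frob_eq (b : OrthonormalBasis ι ℝ E) (e : OrthonormalBasis κ ℝ E)
    (B : E →ₗ[ℝ] E →ₗ[ℝ] ℝ) (hB : ∀ x y, B x y = B y x) :
    ∑ i, ∑ j, (B (b i) (b j)) ^ 2 = ∑ i, ∑ j, (B (e i) (e j)) ^ 2 := by
  calc ∑ i, ∑ j, (B (b i) (b j)) ^ 2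
      = ∑ i, ∑ j, (B (b i) (e j)) ^ 2 :=
        Finset.sum_congr rfl fun i _ => my_sum_sq_apply_eq b e (B (b i))
    _ = ∑ j, ∑ i, (B (b i) (e j)) ^ 2 := Finset.sum_comm
    _ = ∑ j, ∑ i, (B (e j) (b i)) ^ 2 :=
        Finset.sum_congr rfl fun j _ => Finset.sum_congr rfl fun i _ => by rw [hB]
    _ = ∑ j, ∑ i, (B (e j) (e i)) ^ 2 :=
        Finset.sum_congr rfl fun j _ => my_sum_sq_apply_eq b e (B (e j))

end Aux


set_option maxHeartbeats 2000000 in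
/-- Traceless second fundamental form expansion: the squared norm of the trace-free
part of the second fundamental form of a regular level set of `f`, in algebraic form. -/
theorem stmt_4 (n : ℕ) (hn : 3 ≤ n) (m lam rho : ℝ)
    (e : OrthonormalBasis (Fin n) ℝ (EuclideanSpace ℝ (Fin n)))
    (Ric : EuclideanSpace ℝ (Fin n) →ₗ[ℝ] EuclideanSpace ℝ (Fin n) →ₗ[ℝ] ℝ)
    (hRicSymm : ∀ X Y, Ric X Y = Ric Y X)
    (scal : ℝ) (hscal : scal = ∑ i, Ric (e i) (e i))
    (v p : EuclideanSpace ℝ (Fin n)) (hv : v ≠ 0)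
    (hscalEq : scal = ((n : ℝ) - 1) * lam - (m - 1) * rho)
    (hRicv : ∀ X, Ric X v = rho * ⟪X, v⟫_ℝ - (m / 2) * ⟪X, p⟫_ℝ)
    (u : Fin (n - 1) → EuclideanSpace ℝ (Fin n))
    (hu : Orthonormal ℝ u) (huv : ∀ a, ⟪u a, v⟫_ℝ = 0)
    (h : Fin (n - 1) → Fin (n - 1) → ℝ)
    (hh : ∀ a b, h a b = (1 / ‖v‖) *
      (lam * (if a = b then (1 : ℝ) else 0) - Ric (u a) (u b)))
    (σ : ℝ) (hσ : σ = (1 / ((n : ℝ) - 1)) * ∑ a, h a a) :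
    ∑ a, ∑ b, (h a b - σ * (if a = b then (1 : ℝ) else 0)) ^ 2
      = (1 / ‖v‖ ^ 2) * (∑ i, ∑ j, (Ric (e i) (e j)) ^ 2)
        - (m ^ 2 / (2 * ‖v‖ ^ 4)) * ‖p‖ ^ 2
        + (m ^ 2 * ((n : ℝ) - 2) / (4 * ((n : ℝ) - 1) * ‖v‖ ^ 6)) * ⟪p, v⟫_ℝ ^ 2
        + (m * ((m + (n : ℝ) - 1) * rho - ((n : ℝ) - 1) * lam) /
            (((n : ℝ) - 1) * ‖v‖ ^ 4)) * ⟪p, v⟫_ℝ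
        - ((m ^ 2 + (n : ℝ) - 1) / (((n : ℝ) - 1) * ‖v‖ ^ 2)) * rho ^ 2
        + (2 * m / ‖v‖ ^ 2) * lam * rho
        - (((n : ℝ) - 1) / ‖v‖ ^ 2) * lam ^ 2 := by
  classical
  have hvN : ‖v‖ ≠ 0 := norm_ne_zero_iff.mpr hv
  have hn1R : (n : ℝ) - 1 ≠ 0 := by
    have h3 : (3 : ℝ) ≤ (n : ℝ) := by exact_mod_cast hn
    linarith
  have hcard : ((n - 1 : ℕ) : ℝ) = (n : ℝ) - 1 := by
    have h1 : (1 : ℕ) ≤ n := by omega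
    push_cast [Nat.cast_sub h1]
    ring
  -- the normalized gradient direction
  set w : EuclideanSpace ℝ (Fin n) := ‖v‖⁻¹ • v with hw
  -- the extended family
  set g : Option (Fin (n - 1)) → EuclideanSpace ℝ (Fin n) :=
    fun o => Option.elim o w u with hgdef
  have hgnone : g none = w := rfl
  have hgsome : ∀ a, g (some a) = u a := fun a => rfl
  have hgon : Orthonormal ℝ g := by
    rw [orthonormal_iff_ite]
    rintro (_ | a) (_ | b)
    · simp only [hgnone, hw, real_inner_smul_left, real_inner_smul_right, reduceIte]
      rw [real_inner_self_eq_norm_sq, pow_two]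
      field_simp
    · simp only [hgnone, hgsome, hw, real_inner_smul_left]
      rw [real_inner_comm, huv b]
      simp
    · simp only [hgnone, hgsome, hw, real_inner_smul_right, huv a]
      simp
    · have := orthonormal_iff_ite.mp hu a b
      simp only [hgsome, this, Option.some.injEq]
  have hcardo : Fintype.card (Option (Fin (n - 1))) =
      Module.finrank ℝ (EuclideanSpace ℝ (Fin n)) := by
    simp only [Fintype.card_option, Fintype.card_fin, finrank_euclideanSpace_fin]
    omega
  set b0 : OrthonormalBasis (Option (Fin (n - 1))) ℝ (EuclideanSpace ℝ (Fin n)) :=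
    OrthonormalBasis.mk hgon
      (hgon.linearIndependent.span_eq_top_of_card_eq_finrank hcardo).ge with hb0def
  have hb0 : ∀ o, b0 o = g o := fun o => by rw [hb0def, OrthonormalBasis.coe_mk]
  -- abbreviations
  set T : ℝ := ∑ a, Ric (u a) (u a) with hTdef
  set Q : ℝ := ∑ a, ∑ b, (Ric (u a) (u b)) ^ 2 with hQdef
  set P : ℝ := ∑ a, ⟪u a, p⟫_ℝ ^ 2 with hPdef
  set F : ℝ := ∑ i, ∑ j, (Ric (e i) (e j)) ^ 2 with hFdef
  set A : ℝ := Ric w w with hAdef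
  set c : ℝ := ⟪p, v⟫_ℝ with hcdef
  -- values of Ric against w
  have hRw2 : ∀ x, Ric x w = ‖v‖⁻¹ * Ric x v := by
    intro x; rw [hw, map_smul]; simp
  have hRw1 : ∀ x, Ric w x = ‖v‖⁻¹ * Ric v x := by
    intro x; rw [hw, map_smul]; simp
  have hRvv : Ric v v = rho * ‖v‖ ^ 2 - (m / 2) * c := by
    rw [hRicv v, real_inner_self_eq_norm_sq, hcdef, real_inner_comm p v]
  have hA : A = ‖v‖⁻¹ * (‖v‖⁻¹ * (rho * ‖v‖ ^ 2 - (m / 2) * c)) := by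
    rw [hAdef, hRw1, hRw2, hRvv]
  have hRuw : ∀ a, Ric (u a) w = ‖v‖⁻¹ * (-(m / 2) * ⟪u a, p⟫_ℝ) := by
    intro a
    rw [hRw2, hRicv (u a), huv a]
    ring
  have hRwu : ∀ a, Ric w (u a) = ‖v‖⁻¹ * (-(m / 2) * ⟪u a, p⟫_ℝ) := by
    intro a; rw [hRicSymm, hRuw]
  -- trace identity: A + T = scal
  have htr : A + T = scal := by
    have key := my_trace_eq b0 e Ric hRicSymm
    rw [Fintype.sum_option] at key
    simp only [hb0, hgnone, hgsome] at key
    rw [hscal, ← key, hAdef, hTdef]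
  -- Frobenius identity
  have hfrob : A ^ 2 + (m / 2 * ‖v‖⁻¹) ^ 2 * P + (m / 2 * ‖v‖⁻¹) ^ 2 * P + Q = F := by
    have key := my_frob_eq b0 e Ric hRicSymm
    rw [Fintype.sum_option] at key
    simp only [Fintype.sum_option, hb0, hgnone, hgsome] at key
    rw [Finset.sum_add_distrib] at key
    have e1 : ∑ a, (Ric w (u a)) ^ 2 = (m / 2 * ‖v‖⁻¹) ^ 2 * P := by
      rw [hPdef, Finset.mul_sum]
      refine Finset.sum_congr rfl fun a _ => ?_
      rw [hRwu a]; ring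
    have e2 : ∑ a, (Ric (u a) w) ^ 2 = (m / 2 * ‖v‖⁻¹) ^ 2 * P := by
      rw [hPdef, Finset.mul_sum]
      refine Finset.sum_congr rfl fun a _ => ?_
      rw [hRuw a]; ring
    rw [e1, e2] at key
    rw [hFdef, ← key, hAdef, hQdef]
    ring
  -- Parseval for p
  have hpar : (‖v‖⁻¹ * c) ^ 2 + P = ‖p‖ ^ 2 := by
    have key := my_sum_sq_inner b0 p
    rw [Fintype.sum_option] at key
    simp only [hb0, hgnone, hgsome] at key
    have e1 : ⟪p, w⟫_ℝ = ‖v‖⁻¹ * c := by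
      rw [hw, real_inner_smul_right, hcdef]
    have e2 : ∀ a, ⟪p, u a⟫_ℝ = ⟪u a, p⟫_ℝ := fun a => real_inner_comm _ _
    rw [e1] at key
    simp only [e2] at key
    rw [← key, hPdef]
  -- diagonal sum of h
  have hdiag : ∑ a, h a a = (1 / ‖v‖) * (((n : ℝ) - 1) * lam - T) := by
    have e1 : ∀ a : Fin (n - 1), h a a = (1 / ‖v‖) * (lam - Ric (u a) (u a)) := by
      intro a; rw [hh]; simp
    simp_rw [e1]
    rw [← Finset.mul_sum, Finset.sum_sub_distrib, Finset.sum_const, Finset.card_univ,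
      Fintype.card_fin, nsmul_eq_mul, hcard, hTdef]
  have hsig : σ = (1 / ((n : ℝ) - 1)) * ((1 / ‖v‖) * (((n : ℝ) - 1) * lam - T)) := by
    rw [hσ, hdiag]
  -- sum of squares of h
  have hsq : ∑ a, ∑ b, (h a b) ^ 2
      = (1 / ‖v‖ ^ 2) * ((((n : ℝ) - 1) * lam ^ 2 - 2 * lam * T) + Q) := by
    have e1 : ∀ a b : Fin (n - 1), (h a b) ^ 2
        = (1 / ‖v‖ ^ 2) * ((lam ^ 2 - 2 * lam * Ric (u a) (u b)) *
            (if a = b then (1 : ℝ) else 0) + (Ric (u a) (u b)) ^ 2) := by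
      intro a b; rw [hh]
      by_cases hab : a = b <;> simp [hab] <;> ring
    simp_rw [e1, ← Finset.mul_sum]
    congr 1
    simp_rw [Finset.sum_add_distrib]
    rw [← hQdef]
    congr 1
    have e2 : ∀ a : Fin (n - 1), ∑ b, (lam ^ 2 - 2 * lam * Ric (u a) (u b)) *
        (if a = b then (1 : ℝ) else 0) = lam ^ 2 - 2 * lam * Ric (u a) (u a) := by
      intro a
      rw [Finset.sum_eq_single a]
      · simp
      · intro b _ hba; simp [Ne.symm hba]
      · intro habs; exact absurd (Finset.mem_univ a) habs
    simp_rw [e2]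
    rw [Finset.sum_sub_distrib, Finset.sum_const, Finset.card_univ, Fintype.card_fin,
      nsmul_eq_mul, hcard, ← Finset.mul_sum, hTdef]
  -- expansion of the left-hand side
  have hLHS : ∑ a, ∑ b, (h a b - σ * (if a = b then (1 : ℝ) else 0)) ^ 2
      = ∑ a, ∑ b, (h a b) ^ 2 - 2 * σ * (∑ a, h a a) + ((n : ℝ) - 1) * σ ^ 2 := by
    have e1 : ∀ a b : Fin (n - 1), (h a b - σ * (if a = b then (1 : ℝ) else 0)) ^ 2
        = (h a b) ^ 2 + (σ ^ 2 - 2 * σ * h a b) * (if a = b then (1 : ℝ) else 0) := by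
      intro a b; by_cases hab : a = b <;> simp [hab] <;> ring
    simp_rw [e1, Finset.sum_add_distrib]
    have e2 : ∀ a : Fin (n - 1), ∑ b, (σ ^ 2 - 2 * σ * h a b) *
        (if a = b then (1 : ℝ) else 0) = σ ^ 2 - 2 * σ * h a a := by
      intro a
      rw [Finset.sum_eq_single a]
      · simp
      · intro b _ hba; simp [Ne.symm hba]
      · intro habs; exact absurd (Finset.mem_univ a) habs
    simp_rw [e2]
    rw [Finset.sum_sub_distrib, Finset.sum_const, Finset.card_univ,
      Fintype.card_fin, nsmul_eq_mul, hcard, ← Finset.mul_sum]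
    ring
  -- put everything together
  have hQs : Q = F - A ^ 2 - 2 * ((m / 2 * ‖v‖⁻¹) ^ 2 * P) := by linarith [hfrob]
  have hTs : T = scal - A := by linarith [htr]
  have hPs : P = ‖p‖ ^ 2 - (‖v‖⁻¹ * c) ^ 2 := by linarith [hpar]
  rw [hLHS, hsq, hdiag, hsig, hQs, hTs, hPs, hA, hscalEq]
  field_simp
  ring
end

section
/- (Vanishing criterion for Weyl-type tensors in dimension 4.) Let V be a 4-dimensional real inner product space and let W be an algebraic curvature tensor on V that is totally trace-free, i.e., Σ_{i=1}^4 W(X, e_i, e_i, Y) = 0 for all X, Y and every orthonormal basis (e_i). If there exists a nonzero vector v ∈ V such that W(X, Y, Z, v) = 0 for all X, Y, Z ∈ V, then W = 0. -/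
/-!
Choose an orthonormal basis whose last vector is parallel to `v`. The symmetries of `W` make it
vanish as soon as any argument is that vector, so only the components on the orthogonal
3-space remain. In dimension 3 a tensor with the symmetries of a curvature tensor is determined by
its Ricci contraction (the pairs `01, 02, 12` are dual to single indices), and trace-freeness
says that this contraction vanishes: it kills the three sectional components `R ijij` through the
diagonal and the three mixed ones through the off-diagonal Ricci entries.
-/

structure HasCurvatureSymmetries {ι : Type*} (R : ι → ι → ι → ι → ℝ) : Prop where
  antisymm_left : ∀ i j k l, R i j k l = -R j i k l
  antisymm_right : ∀ i j k l, R i j k l = -R i j l k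
  pair_symm : ∀ i j k l, R i j k l = R k l i j

theorem eq_zero_of_antisymm_of_forall_lt {ι : Type*} [LinearOrder ι] {f : ι → ι → ℝ}
    (hf : ∀ i j, f i j = -f j i) (hlt : ∀ i j, i < j → f i j = 0) (i j : ι) : f i j = 0 := by
  rcases lt_trichotomy i j with h | rfl | h
  · exact hlt i j h
  · linarith [hf i i]
  · rw [hf, hlt j i h, neg_zero]

namespace HasCurvatureSymmetries

variable {ι : Type*} {R : ι → ι → ι → ι → ℝ}

theorem comp (hR : HasCurvatureSymmetries R) {κ : Type*} (f : κ → ι) :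
    HasCurvatureSymmetries fun i j k l => R (f i) (f j) (f k) (f l) :=
  ⟨fun _ _ _ _ => hR.antisymm_left .., fun _ _ _ _ => hR.antisymm_right ..,
    fun _ _ _ _ => hR.pair_symm ..⟩

theorem apply_self_left (hR : HasCurvatureSymmetries R) (i k l : ι) : R i i k l = 0 := by
  linarith [hR.antisymm_left i i k l]

theorem apply_self_right (hR : HasCurvatureSymmetries R) (i j k : ι) : R i j k k = 0 := by
  linarith [hR.antisymm_right i j k k]

theorem apply_eq_zero_of_slot_eq (hR : HasCurvatureSymmetries R) {v : ι}
    (hv : ∀ i j k, R i j k v = 0) {i j k l : ι} (h : i = v ∨ j = v ∨ k = v ∨ l = v) :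
    R i j k l = 0 := by
  have hk : ∀ i j l, R i j v l = 0 := fun i j l => by rw [hR.antisymm_right, hv, neg_zero]
  have hi : ∀ j k l, R v j k l = 0 := fun j k l => by rw [hR.pair_symm, hk]
  rcases h with rfl | rfl | rfl | rfl
  · exact hi j k l
  · rw [hR.antisymm_left, hi, neg_zero]
  · exact hk i j l
  · exact hv i j k

theorem eq_zero_of_forall_lt (hR : HasCurvatureSymmetries R) [LinearOrder ι]
    (hlt : ∀ i j k l, i < j → k < l → R i j k l = 0) (i j k l : ι) : R i j k l = 0 := by
  refine eq_zero_of_antisymm_of_forall_lt (f := fun i j => R i j k l)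
    (fun i j => hR.antisymm_left i j k l) (fun i j hij => ?_) i j
  exact eq_zero_of_antisymm_of_forall_lt (f := fun k l => R i j k l)
    (fun k l => hR.antisymm_right i j k l) (hlt i j · · hij) k l

theorem eq_zero_of_ricci_eq_zero_fin_three {R : Fin 3 → Fin 3 → Fin 3 → Fin 3 → ℝ}
    (hR : HasCurvatureSymmetries R) (hric : ∀ a b, ∑ c, R a c c b = 0) (i j k l : Fin 3) :
    R i j k l = 0 := by
  have ric : ∀ a b, R a 0 0 b + R a 1 1 b + R a 2 2 b = 0 := by
    simpa only [Fin.sum_univ_three] using hric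
  have h1 := hR.antisymm_left
  have h2 := hR.antisymm_right
  have h0 := hR.apply_self_left
  have h0' := hR.apply_self_right
  have ric00 : R 0 1 0 1 + R 0 2 0 2 = 0 := by
    linarith [ric 0 0, h0 0 0 0, h2 0 1 1 0, h2 0 2 2 0]
  have ric11 : R 0 1 0 1 + R 1 2 1 2 = 0 := by
    linarith [ric 1 1, h0 1 1 1, h1 1 0 0 1, h2 1 2 2 1]
  have ric22 : R 0 2 0 2 + R 1 2 1 2 = 0 := by
    linarith [ric 2 2, h0 2 2 2, h1 2 0 0 2, h1 2 1 1 2]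
  have sec01 : R 0 1 0 1 = 0 := by linarith
  have sec02 : R 0 2 0 2 = 0 := by linarith
  have sec12 : R 1 2 1 2 = 0 := by linarith
  have mix01_12 : R 0 1 1 2 = 0 := by linarith [ric 0 2, h0 0 0 2, h0' 0 2 2]
  have mix02_12 : R 0 2 1 2 = 0 := by linarith [ric 0 1, h0 0 0 1, h0' 0 1 1, h2 0 2 2 1]
  have mix01_02 : R 0 1 0 2 = 0 := by linarith [ric 1 2, h0 1 1 2, h0' 1 2 2, h1 1 0 0 2]
  have pairs : ∀ i j : Fin 3, i < j → i = 0 ∧ j = 1 ∨ i = 0 ∧ j = 2 ∨ i = 1 ∧ j = 2 := by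
    decide
  refine hR.eq_zero_of_forall_lt (fun i j k l hij hkl => ?_) i j k l
  rcases pairs i j hij with ⟨rfl, rfl⟩ | ⟨rfl, rfl⟩ | ⟨rfl, rfl⟩ <;>
  rcases pairs k l hkl with ⟨rfl, rfl⟩ | ⟨rfl, rfl⟩ | ⟨rfl, rfl⟩ <;>
  first
  | assumption
  | rw [hR.pair_symm]; assumption

theorem eq_zero_of_ricci_eq_zero_of_apply_last {R : Fin 4 → Fin 4 → Fin 4 → Fin 4 → ℝ}
    (hR : HasCurvatureSymmetries R) (hric : ∀ a b, ∑ c, R a c c b = 0)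
    (hlast : ∀ i j k, R i j k (Fin.last 3) = 0) (i j k l : Fin 4) : R i j k l = 0 := by
  have hcast : ∀ i j k l : Fin 3,
      R i.castSucc j.castSucc k.castSucc l.castSucc = 0 := by
    refine eq_zero_of_ricci_eq_zero_fin_three (hR.comp Fin.castSucc) fun a b => ?_
    have h := hric a.castSucc b.castSucc
    rwa [Fin.sum_univ_castSucc, hR.apply_eq_zero_of_slot_eq hlast (by simp), add_zero] at h
  by_cases h : i = Fin.last 3 ∨ j = Fin.last 3 ∨ k = Fin.last 3 ∨ l = Fin.last 3
  · exact hR.apply_eq_zero_of_slot_eq hlast h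
  · simp only [not_or, ← ne_eq, ← Fin.exists_castSucc_eq] at h
    obtain ⟨⟨i, rfl⟩, ⟨j, rfl⟩, ⟨k, rfl⟩, ⟨l, rfl⟩⟩ := h
    exact hcast i j k l

end HasCurvatureSymmetries

theorem exists_orthonormalBasis_apply_eq {V : Type*} [NormedAddCommGroup V]
    [InnerProductSpace ℝ V] [FiniteDimensional ℝ V] {ι : Type*} [Fintype ι]
    (hcard : Module.finrank ℝ V = Fintype.card ι) (i : ι) {u : V} (hu : ‖u‖ = 1) :
    ∃ e : OrthonormalBasis ι ℝ V, e i = u := by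
  have horth : Orthonormal ℝ (({i} : Set ι).domRestrict fun _ => u) :=
    orthonormal_subsingleton_iff.mpr fun _ => hu
  obtain ⟨e, he⟩ := horth.exists_orthonormalBasis_extension_of_card_eq hcard
  exact ⟨e, he i rfl⟩

theorem LinearMap.eq_zero_of_apply_basis₄ {R M N : Type*} [CommSemiring R] [AddCommMonoid M]
    [Module R M] [AddCommMonoid N] [Module R N] {ι : Type*} (b : Module.Basis ι R M)
    {W : M →ₗ[R] M →ₗ[R] M →ₗ[R] M →ₗ[R] N} (h : ∀ i j k l, W (b i) (b j) (b k) (b l) = 0) :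
    W = 0 :=
  b.ext fun i => b.ext fun j => b.ext fun k => b.ext fun l => h i j k l

theorem stmt_9_general {V : Type*} [NormedAddCommGroup V] [InnerProductSpace ℝ V]
    [FiniteDimensional ℝ V] (hdim : Module.finrank ℝ V = 4)
    (W : V →ₗ[ℝ] V →ₗ[ℝ] V →ₗ[ℝ] V →ₗ[ℝ] ℝ)
    (hW1 : ∀ X Y Z T, W X Y Z T = - W Y X Z T)
    (hW2 : ∀ X Y Z T, W X Y Z T = - W X Y T Z)
    (hW3 : ∀ X Y Z T, W X Y Z T = W Z T X Y)
    (hTraceFree : ∀ (e : OrthonormalBasis (Fin 4) ℝ V) (X Y : V),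
      ∑ i, W X (e i) (e i) Y = 0)
    (v : V) (hv : v ≠ 0) (hWv : ∀ X Y Z, W X Y Z v = 0) :
    ∀ X Y Z T, W X Y Z T = 0 := by
  obtain ⟨e, he⟩ := exists_orthonormalBasis_apply_eq (ι := Fin 4) (by simpa using hdim)
    (Fin.last 3) (norm_smul_inv_norm (𝕜 := ℝ) hv)
  have hW : HasCurvatureSymmetries fun X Y Z T => W X Y Z T := ⟨hW1, hW2, hW3⟩
  have hcomp := (hW.comp e).eq_zero_of_ricci_eq_zero_of_apply_last
    (fun a b => hTraceFree e (e a) (e b)) (fun i j k => by simp only [he, map_smul, hWv, smul_zero])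
  have hW0 : W = 0 := LinearMap.eq_zero_of_apply_basis₄ e.toBasis (by simpa using hcomp)
  simp [hW0]

/-- Vanishing criterion for Weyl-type tensors in dimension 4: a totally trace-free
algebraic curvature tensor on a 4-dimensional real inner product space which is
annihilated by some nonzero vector vanishes identically. -/
theorem stmt_9 {V : Type*} [NormedAddCommGroup V] [InnerProductSpace ℝ V]
    [FiniteDimensional ℝ V] (hdim : Module.finrank ℝ V = 4)
    (W : V →ₗ[ℝ] V →ₗ[ℝ] V →ₗ[ℝ] V →ₗ[ℝ] ℝ)
    (hW1 : ∀ X Y Z T, W X Y Z T = - W Y X Z T)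
    (hW2 : ∀ X Y Z T, W X Y Z T = - W X Y T Z)
    (hW3 : ∀ X Y Z T, W X Y Z T = W Z T X Y)
    (hBianchi : ∀ X Y Z T, W X Y Z T + W Y Z X T + W Z X Y T = 0)
    (hTraceFree : ∀ (e : OrthonormalBasis (Fin 4) ℝ V) (X Y : V),
      ∑ i, W X (e i) (e i) Y = 0)
    (v : V) (hv : v ≠ 0) (hWv : ∀ X Y Z, W X Y Z v = 0) :
    ∀ X Y Z T, W X Y Z T = 0 :=
  stmt_9_general hdim W hW1 hW2 hW3 hTraceFree v hv hWv
end
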